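/- Let a < 1/4 be a real number and ξ, ξ₁, ξ₂ real numbers with ξ = ξ₁ + ξ₂. Then |-a·ξ³ + ξ₁³ + ξ₂³| ≥ (1/4 - a)·|ξ|³. -/
import Mathlib

theorem stmt_2 (a : ℝ) (ha : a < 1/4) (ξ ξ₁ ξ₂ : ℝ) (h : ξ = ξ₁ + ξ₂) :
    |(-a * ξ^3 + ξ₁^3 + ξ₂^3)| ≥ (1/4 - a) * |ξ|^3 := by
  have key : -a * ξ^3 + ξ₁^3 + ξ₂^3 = ξ * (3*ξ₁^2 - 3*ξ*ξ₁ + (1-a)*ξ^2) := by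
    subst h; ring
  have hq : 3*ξ₁^2 - 3*ξ*ξ₁ + (1-a)*ξ^2 ≥ (1/4 - a) * ξ^2 := by nlinarith [sq_nonneg (2*ξ₁ - ξ)]
  have hq0 : 0 ≤ 3*ξ₁^2 - 3*ξ*ξ₁ + (1-a)*ξ^2 := by nlinarith [sq_nonneg ξ]
  rw [key, abs_mul, abs_of_nonneg hq0]
  have h3 : |ξ|^3 = |ξ| * ξ^2 := by rw [← sq_abs]; ring
  calc |ξ| * (3*ξ₁^2 - 3*ξ*ξ₁ + (1-a)*ξ^2) ≥ |ξ| * ((1/4 - a) * ξ^2) :=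
        mul_le_mul_of_nonneg_left hq (abs_nonneg ξ)
    _ = (1/4 - a) * |ξ|^3 := by rw [h3]; ring
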